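/- arXiv:0807.4099 — 3 statements merged into one kernel-verified Lean document; each statement's English description precedes it below -/
import Mathlib

section
/- Every point of the hypersurface W = {(s1, s2, s3, t) in C^4 : t^2/4 - (s3/2 + 2*s1)^2 + (s2 + 4)^2 = 0} lies in the image of the map F from (C*)^3 to C^4 sending (v1, v2, v3) to (s1, s2, s3, t) with u_i = v_i + 1/v_i, s1 = u1 + u2 + u3, s2 = u1*u2 + u1*u3 + u2*u3, s3 = u1*u2*u3, and t = (v1 - 1/v1)(v2 - 1/v2)(v3 - 1/v3). -/
/-! Write `uᵢ = vᵢ + 1/vᵢ`. The `uᵢ` can be any roots of the cubic with coefficients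
`s1, s2, s3`, and then `(vᵢ - 1/vᵢ)² = uᵢ² - 4`. On `W`, `t² = ∏ (uᵢ² - 4)`, so `t` is a
product of square roots of the `uᵢ² - 4`. Each `vᵢ` is recovered from `uᵢ` and the chosen
square root `eᵢ` as `(uᵢ + eᵢ)/2`. -/

open Polynomial

lemma exists_add_eq_and_mul_eq {K : Type*} [Field K] [IsAlgClosed K] (a b : K) :
    ∃ x y : K, x + y = a ∧ x * y = b := by
  obtain ⟨x, hx⟩ := IsAlgClosed.exists_root (C 1 * X ^ 2 + C (-a) * X + C b)
    (by rw [degree_quadratic one_ne_zero]; norm_num)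
  refine ⟨x, a - x, by ring, ?_⟩
  simp only [IsRoot, eval_add, eval_mul, eval_C, eval_pow, eval_X] at hx
  linear_combination -hx

lemma exists_elementarySymmetric_eq {K : Type*} [Field K] [IsAlgClosed K] (s1 s2 s3 : K) :
    ∃ u1 u2 u3 : K, s1 = u1 + u2 + u3 ∧ s2 = u1 * u2 + u1 * u3 + u2 * u3 ∧
      s3 = u1 * u2 * u3 := by
  obtain ⟨u1, hu1⟩ := IsAlgClosed.exists_root (C 1 * X ^ 3 + C (-s1) * X ^ 2 + C s2 * X + C (-s3))
    (by rw [degree_cubic one_ne_zero]; norm_num)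
  simp only [IsRoot, eval_add, eval_mul, eval_C, eval_pow, eval_X] at hu1
  obtain ⟨u2, u3, hsum, hprod⟩ := exists_add_eq_and_mul_eq (s1 - u1) (s2 - u1 * (s1 - u1))
  exact ⟨u1, u2, u3, by linear_combination -hsum, by linear_combination -u1 * hsum - hprod,
    by linear_combination -hu1 - u1 * hprod⟩

lemma exists_add_one_div_eq_and_sub_one_div_eq {K : Type*} [Field K] [NeZero (2 : K)]
    {u e : K} (he : e ^ 2 = u ^ 2 - 4) :
    ∃ v : K, v ≠ 0 ∧ v + 1 / v = u ∧ v - 1 / v = e := by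
  have hmul : (u + e) / 2 * ((u - e) / 2) = 1 := by
    field_simp
    linear_combination -he
  have hinv : 1 / ((u + e) / 2) = (u - e) / 2 := (eq_one_div_of_mul_eq_one_right hmul).symm
  refine ⟨(u + e) / 2, left_ne_zero_of_mul_eq_one hmul, ?_, ?_⟩ <;> rw [hinv] <;> field_simp <;> ring

/-- Every point of the hypersurface
`W = {(s1,s2,s3,t) ∈ ℂ⁴ : t²/4 - (s3/2 + 2s1)² + (s2+4)² = 0}` lies in the
image of the map `F : (ℂ*)³ → ℂ⁴` sending `(v1,v2,v3)` to `(s1,s2,s3,t)` with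
`uᵢ = vᵢ + 1/vᵢ`, `s1 = u1+u2+u3`, `s2 = u1u2+u1u3+u2u3`, `s3 = u1u2u3`,
`t = (v1-1/v1)(v2-1/v2)(v3-1/v3)`. -/
theorem stmt_3 (s1 s2 s3 t : ℂ)
    (hW : t ^ 2 / 4 - (s3 / 2 + 2 * s1) ^ 2 + (s2 + 4) ^ 2 = 0) :
    ∃ v1 v2 v3 : ℂ, v1 ≠ 0 ∧ v2 ≠ 0 ∧ v3 ≠ 0 ∧
      s1 = (v1 + 1 / v1) + (v2 + 1 / v2) + (v3 + 1 / v3) ∧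
      s2 = (v1 + 1 / v1) * (v2 + 1 / v2) + (v1 + 1 / v1) * (v3 + 1 / v3)
            + (v2 + 1 / v2) * (v3 + 1 / v3) ∧
      s3 = (v1 + 1 / v1) * (v2 + 1 / v2) * (v3 + 1 / v3) ∧
      t = (v1 - 1 / v1) * (v2 - 1 / v2) * (v3 - 1 / v3) := by
  obtain ⟨u1, u2, u3, rfl, rfl, rfl⟩ := exists_elementarySymmetric_eq s1 s2 s3
  obtain ⟨e1, he1⟩ := IsAlgClosed.exists_pow_nat_eq (u1 ^ 2 - 4) two_pos
  obtain ⟨e2, he2⟩ := IsAlgClosed.exists_pow_nat_eq (u2 ^ 2 - 4) two_pos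
  obtain ⟨e3, he3⟩ := IsAlgClosed.exists_pow_nat_eq (u3 ^ 2 - 4) two_pos
  have ht : t ^ 2 = (e1 * e2 * e3) ^ 2 := by
    linear_combination 4 * hW - e2 ^ 2 * e3 ^ 2 * he1 - (u1 ^ 2 - 4) * e3 ^ 2 * he2
      - (u1 ^ 2 - 4) * (u2 ^ 2 - 4) * he3
  -- Negating `e1`, i.e. replacing `v1` by `1 / v1`, fixes the sign of `t`.
  obtain ⟨e1', he1', rfl⟩ : ∃ e1' : ℂ, e1' ^ 2 = u1 ^ 2 - 4 ∧ t = e1' * e2 * e3 := by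
    rcases sq_eq_sq_iff_eq_or_eq_neg.1 ht with h | h
    · exact ⟨e1, he1, h⟩
    · exact ⟨-e1, by rw [neg_sq, he1], by rw [h]; ring⟩
  obtain ⟨v1, hv1, rfl, rfl⟩ := exists_add_one_div_eq_and_sub_one_div_eq he1'
  obtain ⟨v2, hv2, rfl, rfl⟩ := exists_add_one_div_eq_and_sub_one_div_eq he2
  obtain ⟨v3, hv3, rfl, rfl⟩ := exists_add_one_div_eq_and_sub_one_div_eq he3
  exact ⟨v1, v2, v3, hv1, hv2, hv3, rfl, rfl, rfl, rfl⟩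
end

section
/- Let G be the subgroup of GL(3,Q) generated by all 3x3 permutation matrices together with all diagonal matrices with diagonal entries +1 or -1 having an even number of entries equal to -1. Then for k = 1, 2, 3, the subspace of the k-th exterior power of Q^3 fixed by the induced action of every element of G is zero. -/
open Matrix

/-- A `3×3` rational matrix is a permutation matrix. -/
def IsPermMatrix (A : Matrix (Fin 3) (Fin 3) ℚ) : Prop :=
  ∃ σ : Equiv.Perm (Fin 3), ∀ i j, A i j = if σ j = i then 1 else 0

/-- A `3×3` rational matrix is diagonal with entries `±1` and an even number
of entries equal to `-1`. -/
def IsEvenSignDiag (A : Matrix (Fin 3) (Fin 3) ℚ) : Prop :=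
  (∀ i j, i ≠ j → A i j = 0) ∧ (∀ i, A i i = 1 ∨ A i i = -1) ∧
    (Finset.univ.filter fun i => A i i = -1).card % 2 = 0

/-- The subgroup of `GL(3,ℚ)` generated by the permutation matrices and the
even diagonal sign matrices. -/
def stabGroup : Subgroup (Matrix (Fin 3) (Fin 3) ℚ)ˣ :=
  Subgroup.closure {g | IsPermMatrix (g : Matrix (Fin 3) (Fin 3) ℚ) ∨
    IsEvenSignDiag (g : Matrix (Fin 3) (Fin 3) ℚ)}

/-!
The four diagonal sign matrices with an even number of `-1`s form a Klein four-group, diagonal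
on the monomial basis of `⋀ ℚ³`, and its character on `eᵢ` or `eᵢ ∧ eⱼ` is nontrivial. So the sum
of its four actions vanishes on `⋀¹` and `⋀²`, while on an invariant vector it is multiplication
by `4`. On the top power `⋀³` every linear map acts by its determinant, and a transposition
matrix has determinant `-1`.
-/

namespace ExteriorAlgebra

variable {R M N : Type*} [CommRing R] [AddCommGroup M] [Module R M] [AddCommGroup N] [Module R N]

theorem linearMap_eq_of_mem_exteriorPower {n : ℕ} {φ ψ : ExteriorAlgebra R M →ₗ[R] N}
    (h : φ.compAlternatingMap (ιMulti R n) = ψ.compAlternatingMap (ιMulti R n))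
    {x : ExteriorAlgebra R M} (hx : x ∈ ⋀[R]^n M) : φ x = ψ x := by
  rw [← ιMulti_span_fixedDegree] at hx
  refine LinearMap.eqOn_span' ?_ hx
  rintro - ⟨v, rfl⟩
  exact congr($h v)

theorem ιMulti_eq_basis_det_smul {n : ℕ} (e : Module.Basis (Fin n) R M) (v : Fin n → M) :
    ιMulti R n v = e.det v • ιMulti R n e := by
  suffices ιMulti R n = e.det.smulRight (ιMulti R n e) from congr($this v)
  refine e.ext_alternating fun w hw => ?_
  let σ : Equiv.Perm (Fin n) := Equiv.ofBijective w (Finite.injective_iff_bijective.1 hw)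
  change ιMulti R n (e ∘ σ) = e.det (e ∘ σ) • ιMulti R n e
  rw [AlternatingMap.map_perm, AlternatingMap.map_perm, e.det_self, smul_assoc, one_smul]

theorem map_eq_det_smul_of_mem_exteriorPower {n : ℕ} (e : Module.Basis (Fin n) R M)
    (f : M →ₗ[R] M) {x : ExteriorAlgebra R M} (hx : x ∈ ⋀[R]^n M) :
    map f x = LinearMap.det f • x := by
  refine linearMap_eq_of_mem_exteriorPower (φ := (map f).toLinearMap)
    (ψ := LinearMap.det f • LinearMap.id) ?_ hx
  ext v
  simp only [LinearMap.compAlternatingMap_apply, AlgHom.toLinearMap_apply, map_apply_ιMulti,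
    LinearMap.smul_apply, LinearMap.id_apply]
  rw [ιMulti_eq_basis_det_smul e, e.det_comp, mul_smul, ← ιMulti_eq_basis_det_smul e]

theorem map_toLin'_diagonal_ιMulti_single {ι : Type*} [Fintype ι] [DecidableEq ι] {n : ℕ}
    (d : ι → R) (v : Fin n → ι) :
    map (toLin' (diagonal d)) (ιMulti R n fun j => Pi.single (v j) 1) =
      (∏ j, d (v j)) • ιMulti R n fun j => Pi.single (v j) 1 := by
  rw [map_apply_ιMulti, ← AlternatingMap.map_smul_univ]
  congr 1
  ext j : 1
  rw [Function.comp_apply, toLin'_apply, diagonal_mulVec_single, ← smul_eq_mul, Pi.single_smul']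

theorem sum_map_toLin'_diagonal_eq_zero_of_mem_exteriorPower {ι κ : Type*} [Fintype ι]
    [DecidableEq ι] [Fintype κ] {n : ℕ} (D : κ → ι → R)
    (hD : ∀ v : Fin n → ι, Function.Injective v → ∑ c, ∏ j, D c (v j) = 0)
    {x : ExteriorAlgebra R (ι → R)} (hx : x ∈ ⋀[R]^n (ι → R)) :
    ∑ c, map (toLin' (diagonal (D c))) x = 0 := by
  have := linearMap_eq_of_mem_exteriorPower
    (φ := ∑ c, (map (toLin' (diagonal (D c)))).toLinearMap) (ψ := 0) ?_ hx
  · simpa using this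
  refine (Pi.basisFun R ι).ext_alternating fun v hv => ?_
  simp only [LinearMap.compAlternatingMap_apply, LinearMap.coe_sum, Finset.sum_apply,
    AlgHom.toLinearMap_apply, Pi.basisFun_apply, map_toLin'_diagonal_ιMulti_single,
    ← Finset.sum_smul, hD v hv, zero_smul, LinearMap.zero_apply]

theorem eq_zero_of_map_eq_self_of_det_eq_neg_one {K V : Type*} [Field K] [NeZero (2 : K)]
    [AddCommGroup V] [Module K V] {n : ℕ} (e : Module.Basis (Fin n) K V) {f : V →ₗ[K] V}
    (hf : LinearMap.det f = -1) {x : ExteriorAlgebra K V} (hx : x ∈ ⋀[K]^n V)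
    (hfix : map f x = x) : x = 0 := by
  have hneg : x = -x := by
    rw [← neg_one_smul K x, ← hf, ← map_eq_det_smul_of_mem_exteriorPower e f hx, hfix]
  have h2 : (2 : K) • x = 0 := by
    rw [two_smul]
    nth_rewrite 2 [hneg]
    exact add_neg_cancel x
  exact (smul_eq_zero.mp h2).resolve_left two_ne_zero

end ExteriorAlgebra

theorem isPermMatrix_permMatrix (σ : Equiv.Perm (Fin 3)) : IsPermMatrix (σ.permMatrix ℚ) :=
  ⟨σ⁻¹, fun i j => by
    simp [PEquiv.toMatrix_apply, Equiv.Perm.inv_def, Equiv.eq_symm_apply, eq_comm]⟩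

theorem IsEvenSignDiag.isUnit {A : Matrix (Fin 3) (Fin 3) ℚ} (hA : IsEvenSignDiag A) :
    IsUnit A := by
  have hdiag : A = diagonal fun i => A i i := by
    ext i j
    rcases eq_or_ne i j with rfl | hij
    · rw [diagonal_apply_eq]
    · rw [diagonal_apply_ne _ hij, hA.1 i j hij]
  rw [hdiag, isUnit_diagonal, Pi.isUnit_iff]
  intro i
  rcases hA.2.1 i with h | h <;> simp [h]

def evenSign : Option (Fin 3) → Fin 3 → ℚ
  | none => 1
  | some t => fun i => if i = t then 1 else -1

theorem isEvenSignDiag_diagonal_evenSign (c : Option (Fin 3)) :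
    IsEvenSignDiag (diagonal (evenSign c)) := by
  refine ⟨fun i j hij => diagonal_apply_ne _ hij, fun i => ?_, ?_⟩
  · rcases c with _ | t
    · simp [evenSign]
    · by_cases h : i = t <;> simp [evenSign, h]
  · rcases c with _ | t
    · norm_num [evenSign]
    · fin_cases t <;> decide

theorem sum_prod_evenSign_eq_zero {k : ℕ} (hk : k = 1 ∨ k = 2) (v : Fin k → Fin 3)
    (hv : Function.Injective v) : ∑ c, ∏ j, evenSign c (v j) = 0 := by
  rcases hk with rfl | rfl
  · simp only [Fintype.sum_option, Fin.sum_univ_three, Fin.prod_univ_one, evenSign]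
    generalize v 0 = a
    fin_cases a <;> simp
  · have h01 : v 0 ≠ v 1 := hv.ne (by decide)
    simp only [Fintype.sum_option, Fin.sum_univ_three, Fin.prod_univ_two, evenSign]
    generalize v 0 = a, v 1 = b at h01
    fin_cases a <;> fin_cases b <;> simp_all

open ExteriorAlgebra in
theorem eq_zero_of_forall_map_evenSign_eq_self {k : ℕ} (hk : k = 1 ∨ k = 2)
    {x : ExteriorAlgebra ℚ (Fin 3 → ℚ)} (hx : x ∈ ⋀[ℚ]^k (Fin 3 → ℚ))
    (hfix : ∀ c, map (toLin' (diagonal (evenSign c))) x = x) : x = 0 := by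
  have hsum := sum_map_toLin'_diagonal_eq_zero_of_mem_exteriorPower evenSign
    (sum_prod_evenSign_eq_zero hk) hx
  simp only [hfix, Finset.sum_const, Finset.card_univ, Fintype.card_option, Fintype.card_fin,
    ← Nat.cast_smul_eq_nsmul ℚ] at hsum
  exact (smul_eq_zero.mp hsum).resolve_left (by norm_num)

/-- For `k = 1, 2, 3`, the subspace of `⋀^k ℚ³` fixed by the induced action
of every element of `stabGroup` is zero. -/
theorem stmt_8 (k : ℕ) (hk1 : 1 ≤ k) (hk3 : k ≤ 3)
    (x : ExteriorAlgebra ℚ (Fin 3 → ℚ)) (hx : x ∈ ⋀[ℚ]^k (Fin 3 → ℚ))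
    (hfix : ∀ g ∈ stabGroup,
      ExteriorAlgebra.map (Matrix.toLin' (g : Matrix (Fin 3) (Fin 3) ℚ)) x = x) :
    x = 0 := by
  have hgen : ∀ A, IsUnit A → IsPermMatrix A ∨ IsEvenSignDiag A →
      ExteriorAlgebra.map (toLin' A) x = x := fun A hA hAgen => by
    simpa using hfix hA.unit (Subgroup.subset_closure (by simpa using hAgen))
  obtain hk | rfl : (k = 1 ∨ k = 2) ∨ k = 3 := by omega
  · refine eq_zero_of_forall_map_evenSign_eq_self hk hx fun c => ?_
    have hc := isEvenSignDiag_diagonal_evenSign c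
    exact hgen _ hc.isUnit (.inr hc)
  · let σ : Equiv.Perm (Fin 3) := Equiv.swap 0 1
    have hdet : (σ.permMatrix ℚ).det = -1 := by simp [σ]
    refine ExteriorAlgebra.eq_zero_of_map_eq_self_of_det_eq_neg_one (Pi.basisFun ℚ (Fin 3))
      (f := toLin' (σ.permMatrix ℚ)) (by rw [LinearMap.det_toLin', hdet]) hx ?_
    exact hgen _ (by simp [isUnit_iff_isUnit_det, hdet]) (.inl (isPermMatrix_permMatrix σ))
end

section
/- Let G be the subgroup of GL(3,Q) generated by all permutation matrices and all diagonal sign matrices with an even number of -1 entries. If two points (v1,v2,v3) and (w1,w2,w3) of (C*)^3 have the same image under the map F(v1,v2,v3) = (s1,s2,s3,t) (where u_i = v_i + 1/v_i, s1, s2, s3 are the elementary symmetric functions of u1, u2, u3, and t = (v1-1/v1)(v2-1/v2)(v3-1/v3)), then (w1,w2,w3) is obtained from (v1,v2,v3) by a permutation of the coordinates composed with inversion v_i -> 1/v_i applied to an even number of coordinates. -/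
/-!
The four coordinates of `F` determine `u₁, u₂, u₃` up to order (they are the roots of
`X³ - s₁X² + s₂X - s₃`), and `uᵢ = wᵢ + 1/wᵢ` determines `wᵢ` up to inversion. So
`w = v ∘ σ` up to inverting some set of coordinates. Inverting `vᵢ` changes the sign of
`vᵢ - 1/vᵢ`, so `t` pins down the parity of that set, unless `t = 0`; then some `vⱼ = 1/vⱼ`
and inverting the `j`-th coordinate or not is a free choice that fixes the parity.
-/

open Polynomial Finset

theorem exists_perm_apply_eq_of_map_univ_eq {ι α : Type*} [Fintype ι] [DecidableEq α]
    {a b : ι → α} (h : univ.val.map a = univ.val.map b) :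
    ∃ σ : Equiv.Perm ι, ∀ i, b i = a (σ i) := by
  have fiber (x : α) : {i // b i = x} ≃ {i // a i = x} :=
    Fintype.equivOfCardEq <| by
      simpa [Fintype.card_subtype, Multiset.count_map, eq_comm, card_def] using
        (congrArg (Multiset.count x) h).symm
  exact ⟨Equiv.ofFiberEquiv fiber, fun i => (Equiv.ofFiberEquiv_map fiber i).symm⟩

theorem exists_perm_apply_eq_of_prod_X_sub_C_eq {ι R : Type*} [Fintype ι] [CommRing R]
    [IsDomain R] [DecidableEq R] {a b : ι → R}
    (h : ∏ i, (X - C (a i)) = ∏ i, (X - C (b i))) :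
    ∃ σ : Equiv.Perm ι, ∀ i, b i = a (σ i) := by
  have roots (c : ι → R) : (∏ i, (X - C (c i))).roots = univ.val.map c := by
    rw [prod_eq_multiset_prod, ← roots_multiset_prod_X_sub_C (univ.val.map c), Multiset.map_map]
    rfl
  exact exists_perm_apply_eq_of_map_univ_eq (by rw [← roots, ← roots, h])

theorem prod_X_sub_C_fin_three {R : Type*} [CommRing R] (a : Fin 3 → R) :
    ∏ i, (X - C (a i)) = X ^ 3 - C (a 0 + a 1 + a 2) * X ^ 2
      + C (a 0 * a 1 + a 0 * a 2 + a 1 * a 2) * X - C (a 0 * a 1 * a 2) := by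
  simp only [Fin.prod_univ_three, map_add, map_mul]
  ring

theorem exists_perm_apply_eq_of_esymm_eq_fin_three {R : Type*} [CommRing R] [IsDomain R]
    {a b : Fin 3 → R}
    (h₁ : a 0 + a 1 + a 2 = b 0 + b 1 + b 2)
    (h₂ : a 0 * a 1 + a 0 * a 2 + a 1 * a 2 = b 0 * b 1 + b 0 * b 2 + b 1 * b 2)
    (h₃ : a 0 * a 1 * a 2 = b 0 * b 1 * b 2) :
    ∃ σ : Equiv.Perm (Fin 3), ∀ i, b i = a (σ i) := by
  classical
  exact exists_perm_apply_eq_of_prod_X_sub_C_eq <| by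
    rw [prod_X_sub_C_fin_three, prod_X_sub_C_fin_three, h₁, h₂, h₃]

theorem exists_even_card_update {ι : Type*} [Fintype ι] [DecidableEq ι] (ε : ι → Bool) (j : ι) :
    ∃ b, Even #{i | Function.update ε j b i} := by
  set S : Finset ι := {i | Function.update ε j false i}
  have hj : j ∉ S := by simp [S]
  have htrue : #{i | Function.update ε j true i} = #(insert j S) := by
    congr 1; ext i; rcases eq_or_ne i j with rfl | hij <;> simp [S, Function.update_of_ne, *]
  rcases Nat.even_or_odd #S with h | h
  · exact ⟨false, h⟩
  · exact ⟨true, by rw [htrue, card_insert_of_notMem hj]; exact h.add_one⟩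

section InvFlips

variable {K : Type*} [Field K]

theorem eq_or_eq_inv_of_add_inv_eq {x y : K} (hx : x ≠ 0) (hy : y ≠ 0)
    (h : x + x⁻¹ = y + y⁻¹) : x = y ∨ x = y⁻¹ := by
  have hfactor : (x - y) * (x * y - 1) = 0 := by
    linear_combination x * y * h - y * mul_inv_cancel₀ hx + x * mul_inv_cancel₀ hy
  rcases mul_eq_zero.mp hfactor with h | h
  · exact Or.inl (sub_eq_zero.mp h)
  · exact Or.inr (eq_inv_of_mul_eq_one_left (sub_eq_zero.mp h))

theorem ite_inv_sub_inv (b : Bool) (u : K) :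
    (if b then u⁻¹ else u) - (if b then u⁻¹ else u)⁻¹ = (if b then -1 else 1) * (u - u⁻¹) := by
  cases b <;> simp

theorem prod_ite_inv_sub_inv {ι : Type*} [Fintype ι] (ε : ι → Bool) (u : ι → K) :
    ∏ i, ((if ε i then (u i)⁻¹ else u i) - (if ε i then (u i)⁻¹ else u i)⁻¹)
      = (-1) ^ #{i | ε i} * ∏ i, (u i - (u i)⁻¹) := by
  simp only [ite_inv_sub_inv, prod_mul_distrib, prod_ite, prod_const, one_pow, mul_one]

theorem exists_even_inv_flips [NeZero (2 : K)] {ι : Type*} [Fintype ι] {u w : ι → K}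
    {ε : ι → Bool} (hε : ∀ i, w i = if ε i then (u i)⁻¹ else u i)
    (ht : ∏ i, (w i - (w i)⁻¹) = ∏ i, (u i - (u i)⁻¹)) :
    ∃ ε' : ι → Bool, Even #{i | ε' i} ∧ ∀ i, w i = if ε' i then (u i)⁻¹ else u i := by
  classical
  by_cases h0 : ∏ i, (u i - (u i)⁻¹) = 0
  · obtain ⟨j, -, hj⟩ := prod_eq_zero_iff.mp h0
    have huj : u j = (u j)⁻¹ := sub_eq_zero.mp hj
    obtain ⟨b, hb⟩ := exists_even_card_update ε j
    refine ⟨Function.update ε j b, hb, fun i => ?_⟩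
    rcases eq_or_ne i j with rfl | hij
    · simp only [hε, Function.update_self, ← huj, ite_self]
    · rw [Function.update_of_ne hij, hε]
  · refine ⟨ε, ?_, hε⟩
    have hneg : (-1 : K) ≠ 1 := fun h => two_ne_zero (α := K) (by linear_combination -h)
    rw [← neg_one_pow_eq_one_iff_even hneg]
    simp only [hε, prod_ite_inv_sub_inv] at ht
    exact mul_right_cancel₀ h0 (ht.trans (one_mul _).symm)

end InvFlips

/-- If two points `v, w ∈ (ℂ*)³` have the same image under the map
`F(v1,v2,v3) = (s1,s2,s3,t)`, where `uᵢ = vᵢ + 1/vᵢ`, `s1, s2, s3` are the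
elementary symmetric functions of `u1, u2, u3`, and
`t = (v1-1/v1)(v2-1/v2)(v3-1/v3)`, then `w` is obtained from `v` by a
permutation of the coordinates composed with the inversion `vᵢ ↦ 1/vᵢ`
applied to an even number of coordinates. -/
theorem stmt_14 (v w : Fin 3 → ℂ) (hv : ∀ i, v i ≠ 0) (hw : ∀ i, w i ≠ 0)
    (hs1 : (v 0 + 1 / v 0) + (v 1 + 1 / v 1) + (v 2 + 1 / v 2)
         = (w 0 + 1 / w 0) + (w 1 + 1 / w 1) + (w 2 + 1 / w 2))
    (hs2 : (v 0 + 1 / v 0) * (v 1 + 1 / v 1) + (v 0 + 1 / v 0) * (v 2 + 1 / v 2)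
            + (v 1 + 1 / v 1) * (v 2 + 1 / v 2)
         = (w 0 + 1 / w 0) * (w 1 + 1 / w 1) + (w 0 + 1 / w 0) * (w 2 + 1 / w 2)
            + (w 1 + 1 / w 1) * (w 2 + 1 / w 2))
    (hs3 : (v 0 + 1 / v 0) * (v 1 + 1 / v 1) * (v 2 + 1 / v 2)
         = (w 0 + 1 / w 0) * (w 1 + 1 / w 1) * (w 2 + 1 / w 2))
    (ht : (v 0 - 1 / v 0) * (v 1 - 1 / v 1) * (v 2 - 1 / v 2)
        = (w 0 - 1 / w 0) * (w 1 - 1 / w 1) * (w 2 - 1 / w 2)) :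
    ∃ (σ : Equiv.Perm (Fin 3)) (ε : Fin 3 → Bool),
      (Finset.univ.filter fun i => ε i = true).card % 2 = 0 ∧
      ∀ i, w i = if ε i then (v (σ i))⁻¹ else v (σ i) := by
  simp only [one_div] at hs1 hs2 hs3 ht
  obtain ⟨σ, hσ⟩ := exists_perm_apply_eq_of_esymm_eq_fin_three
    (a := fun i => v i + (v i)⁻¹) (b := fun i => w i + (w i)⁻¹) hs1 hs2 hs3
  have hflip (i : Fin 3) : ∃ b : Bool, w i = if b then (v (σ i))⁻¹ else v (σ i) :=
    (eq_or_eq_inv_of_add_inv_eq (hw i) (hv (σ i)) (hσ i)).elim (⟨false, ·⟩) (⟨true, ·⟩)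
  choose ε hε using hflip
  have hprod : ∏ i, (w i - (w i)⁻¹) = ∏ i, (v (σ i) - (v (σ i))⁻¹) := by
    rw [Equiv.prod_comp σ (fun i => v i - (v i)⁻¹), Fin.prod_univ_three, Fin.prod_univ_three, ht]
  obtain ⟨ε', heven, hε'⟩ := exists_even_inv_flips hε hprod
  exact ⟨σ, ε', Nat.even_iff.mp heven, hε'⟩
end
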